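/- arXiv:1801.05154 — 3 statements merged into one kernel-verified Lean document; each statement's English description precedes it below -/
import Mathlib

section
/- Let k be a commutative ring, X a finite poset, and let a ≤ b and c ≤ d be elements of X. Then the k-module of natural transformations from M_{a,b} to M_{c,d} in the functor category F_{X,k} is isomorphic to k if c ≤ a ≤ d ≤ b, and is the zero module otherwise. -/
/-!
A natural transformation `η : M_{a,b} ⟶ M_{c,d}` is determined by `η_a(1)`: every point of
`[a,b]` lies above `a`, and naturality along `a ≤ x` carries `η_a(1)` to `η_x(1)`. This value
vanishes unless `a ∈ [c,d]`, and naturality along `a ≤ d` forces it to vanish unless `d ≤ b`,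
since `M_{a,b}(d) = 0` then. When `c ≤ a ≤ d ≤ b`, the map which is the identity of `k` on
`[a,b] ∩ [c,d] = [a,d]` is natural, so `η ↦ η_a(1)` is an isomorphism onto `k`.
-/
open CategoryTheory
open scoped Classical
namespace PaperInterval
noncomputable def charFunctor (k : Type) [CommRing k] (P : Type) [PartialOrder P] (S : P → Prop)
    (hS : ∀ ⦃x y z : P⦄, x ≤ y → y ≤ z → S x → S z → S y) :
    P ⥤ ModuleCat.{0} k where
  obj x := ModuleCat.of k (PLift (S x) → k)
  map {x x'} _ := ModuleCat.ofHom
    { toFun := fun g _ => if h : S x then g ⟨h⟩ else 0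
      map_add' := by intro g₁ g₂; funext h'; by_cases h : S x <;> simp [h]
      map_smul' := by intro r g; funext h'; by_cases h : S x <;> simp [h] }
  map_id x := by
    apply ModuleCat.hom_ext; apply LinearMap.ext; intro g; funext h'
    by_cases h : S x
    · simp only [ModuleCat.hom_ofHom, ModuleCat.hom_id, LinearMap.id_coe, id_eq,
        LinearMap.coe_mk, AddHom.coe_mk, dif_pos h]
    · exact absurd h'.down h
  map_comp {x y z} f g := by
    apply ModuleCat.hom_ext; apply LinearMap.ext; intro u; funext h'
    by_cases hx : S x
    · have hy : S y := hS (leOfHom f) (leOfHom g) hx h'.down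
      simp [ModuleCat.hom_ofHom, ModuleCat.hom_comp, dif_pos hx, dif_pos hy]
    · by_cases hy : S y <;>
        simp [ModuleCat.hom_ofHom, ModuleCat.hom_comp, dif_neg hx, hy]

noncomputable def Mab (k : Type) [CommRing k] (X : Type) [PartialOrder X] (a b : X) :
    X ⥤ ModuleCat.{0} k :=
  charFunctor k X (fun x => a ≤ x ∧ x ≤ b)
    (fun _ _ _ h1 h2 hx hz => ⟨hx.1.trans h1, h2.trans hz.2⟩)

noncomputable def Pfun (k : Type) [CommRing k] (P : Type) [PartialOrder P] (p : P) :
    P ⥤ ModuleCat.{0} k :=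
  charFunctor k P (fun z => p ≤ z) (fun _ _ _ h1 _ hx _ => hx.trans h1)

noncomputable def Ifun (k : Type) [CommRing k] (P : Type) [PartialOrder P] (p : P) :
    P ⥤ ModuleCat.{0} k :=
  charFunctor k P (fun z => z ≤ p) (fun _ _ _ _ h2 _ hz => h2.trans hz)

section CharFunctor

variable {k : Type} [CommRing k] {X : Type} [PartialOrder X] {S T : X → Prop}
  {hS : ∀ ⦃x y z : X⦄, x ≤ y → y ≤ z → S x → S z → S y}
  {hT : ∀ ⦃x y z : X⦄, x ≤ y → y ≤ z → T x → T z → T y}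

def charFunctorOne (x : X) : (charFunctor k X S hS).obj x := fun _ => 1

lemma charFunctor_map_apply {x x' : X} (f : x ⟶ x') (g : (charFunctor k X S hS).obj x)
    (p : PLift (S x')) :
    (charFunctor k X S hS).map f g p = if h : S x then g ⟨h⟩ else 0 :=
  rfl

lemma charFunctor_obj_eq_zero {x : X} (hx : ¬S x) (g : (charFunctor k X S hS).obj x) :
    g = 0 :=
  funext fun p => absurd p.down hx

lemma charFunctor_obj_eq_smul_one {x : X} (hx : S x) (g : (charFunctor k X S hS).obj x) :
    g = g ⟨hx⟩ • charFunctorOne x := by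
  funext p
  exact (mul_one _).symm

lemma charFunctor_map_one {x x' : X} (f : x ⟶ x') (hx : S x) :
    (charFunctor k X S hS).map f (charFunctorOne x) = charFunctorOne x' := by
  funext p
  exact dif_pos hx

lemma charFunctor_natTrans_app_eq {F : X ⥤ ModuleCat.{0} k} (η : charFunctor k X S hS ⟶ F)
    {a x : X} (hax : a ≤ x) (ha : S a) (hx : S x) (g : (charFunctor k X S hS).obj x) :
    η.app x g = g ⟨hx⟩ • F.map (homOfLE hax) (η.app a (charFunctorOne a)) := by
  have hnat := ConcreteCategory.congr_hom (η.naturality (homOfLE hax)) (charFunctorOne a)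
  rw [ConcreteCategory.comp_apply, ConcreteCategory.comp_apply, charFunctor_map_one _ ha] at hnat
  rw [← hnat, ← map_smul, ← charFunctor_obj_eq_smul_one hx]

lemma charFunctor_natTrans_ext {F : X ⥤ ModuleCat.{0} k} {a : X} (ha : IsLeast {x | S x} a)
    {η η' : charFunctor k X S hS ⟶ F}
    (h : η.app a (charFunctorOne a) = η'.app a (charFunctorOne a)) : η = η' := by
  refine NatTrans.ext (funext fun x => ConcreteCategory.hom_ext _ _ fun g => ?_)
  by_cases hx : S x
  · rw [charFunctor_natTrans_app_eq η (ha.2 hx) ha.1 hx,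
      charFunctor_natTrans_app_eq η' (ha.2 hx) ha.1 hx, h]
  · rw [charFunctor_obj_eq_zero hx g, map_zero, map_zero]

lemma charFunctor_natTrans_app_eq_zero (η : charFunctor k X S hS ⟶ charFunctor k X T hT)
    {x y : X} (hxy : x ≤ y) (hy : T y) (hSy : ¬S y) (g : (charFunctor k X S hS).obj x) :
    η.app x g = 0 := by
  have hnat := ConcreteCategory.congr_hom (η.naturality (homOfLE hxy)) g
  rw [ConcreteCategory.comp_apply, ConcreteCategory.comp_apply, charFunctor_obj_eq_zero hSy
    ((charFunctor k X S hS).map _ g), map_zero] at hnat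
  funext p
  have hp := congrFun hnat.symm ⟨hy⟩
  rwa [charFunctor_map_apply, dif_pos p.down] at hp

noncomputable def charFunctorHom (h : ∀ ⦃x y : X⦄, x ≤ y → S x → T y → T x ∧ S y) :
    charFunctor k X S hS ⟶ charFunctor k X T hT where
  app x := ModuleCat.ofHom
    { toFun := fun g _ => if hx : S x then g ⟨hx⟩ else 0
      map_add' := by intro g₁ g₂; funext p; by_cases hx : S x <;> simp [hx]
      map_smul' := by intro r g; funext p; by_cases hx : S x <;> simp [hx] }
  naturality x y f := by
    refine ConcreteCategory.hom_ext _ _ fun g => funext fun p => ?_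
    change (if _ : S y then (if hx : S x then g ⟨hx⟩ else 0) else 0)
      = if _ : T x then (if hx : S x then g ⟨hx⟩ else 0) else 0
    by_cases hx : S x
    · obtain ⟨hTx, hSy⟩ := h (leOfHom f) hx p.down
      simp [hx, hTx, hSy]
    · simp [hx]

noncomputable def charFunctorHomEquiv {a : X} (ha : IsLeast {x | S x} a) (hTa : T a)
    (h : ∀ ⦃x y : X⦄, x ≤ y → S x → T y → T x ∧ S y) :
    (charFunctor k X S hS ⟶ charFunctor k X T hT) ≃ₗ[k] k where
  toFun η := η.app a (charFunctorOne a) ⟨hTa⟩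
  map_add' _ _ := rfl
  map_smul' _ _ := rfl
  invFun r := r • charFunctorHom h
  left_inv η := by
    refine charFunctor_natTrans_ext ha (funext fun p => ?_)
    show η.app a (charFunctorOne a) ⟨hTa⟩ * (if _ : S a then 1 else 0) = _
    rw [dif_pos (show S a from ha.1), mul_one]
  right_inv r := by
    show r * (if _ : S a then 1 else 0) = r
    rw [dif_pos (show S a from ha.1), mul_one]

end CharFunctor

lemma Mab_hom_eq_zero {k : Type} [CommRing k] {X : Type} [PartialOrder X] {a b c d : X}
    (hab : a ≤ b) (h : ¬(c ≤ a ∧ a ≤ d ∧ d ≤ b)) (η : Mab k X a b ⟶ Mab k X c d) : η = 0 := by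
  refine charFunctor_natTrans_ext (isLeast_Icc hab) ?_
  rw [NatTrans.app_zero]
  show _ = 0
  by_cases ha : c ≤ a ∧ a ≤ d
  · exact charFunctor_natTrans_app_eq_zero η ha.2 ⟨ha.1.trans ha.2, le_rfl⟩
      (fun hd => h ⟨ha.1, ha.2, hd.2⟩) _
  · exact charFunctor_obj_eq_zero (x := a) ha _

theorem statement0_general (k : Type) [CommRing k] (X : Type) [PartialOrder X]
    (a b c d : X) (hab : a ≤ b) :
    (c ≤ a ∧ a ≤ d ∧ d ≤ b →
      Nonempty ((Mab k X a b ⟶ Mab k X c d) ≃ₗ[k] k)) ∧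
    (¬(c ≤ a ∧ a ≤ d ∧ d ≤ b) →
      Subsingleton (Mab k X a b ⟶ Mab k X c d)) := by
  refine ⟨fun ⟨hca, had, hdb⟩ => ⟨charFunctorHomEquiv (isLeast_Icc hab) ⟨hca, had⟩ ?_⟩,
    fun h => ⟨fun η η' => by rw [Mab_hom_eq_zero hab h η, Mab_hom_eq_zero hab h η']⟩⟩
  exact fun x y hxy hx hy => ⟨⟨hca.trans hx.1, hxy.trans hy.2⟩, hx.1.trans hxy, hy.2.trans hdb⟩

/-- For a commutative ring `k`, a finite poset `X` and intervals
`[a,b]`, `[c,d]` of `X`, the `k`-module of natural transformations `M_{a,b} ⟶ M_{c,d}`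
in the functor category `F_{X,k}` is isomorphic to `k` if `c ≤ a ≤ d ≤ b`,
and is the zero module otherwise. -/
theorem statement0 (k : Type) [CommRing k] (X : Type) [PartialOrder X] [Fintype X]
    (a b c d : X) (hab : a ≤ b) (hcd : c ≤ d) :
    (c ≤ a ∧ a ≤ d ∧ d ≤ b →
      Nonempty ((Mab k X a b ⟶ Mab k X c d) ≃ₗ[k] k)) ∧
    (¬(c ≤ a ∧ a ≤ d ∧ d ≤ b) →
      Subsingleton (Mab k X a b ⟶ Mab k X c d)) :=
  statement0_general k X a b c d hab

end PaperInterval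
end

section
/- Let k be a commutative ring, X and Y finite posets, and F : Y → J(X) an order-preserving map into the poset of lower sets of X. Fix y ∈ Y. Define a functor (i_y)_* : F_{F(y),k} → F_{Γ,k} by sending φ to the functor whose value at (a,b) ∈ Γ is φ(a) if b ≤ y and 0 otherwise, with transition map for (a,b) ≤ (c,d) equal to φ(a ≤ c) when both b ≤ y and d ≤ y and zero otherwise. Then (i_y)_* is right adjoint to the restriction functor i_y^{-1} : F_{Γ,k} → F_{F(y),k} given by precomposition with i_y. -/
open CategoryTheory
namespace PaperInterval

variable {X Y : Type} [PartialOrder X] [PartialOrder Y]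

/-- The poset `Γ` of generalized intervals attached to an order-preserving map
`F : Y → J(X)`. -/
def Gam (F : Y →o LowerSet X) : Type := {p : X × Y // p.1 ∈ F p.2}

instance (F : Y →o LowerSet X) : PartialOrder (Gam F) :=
  inferInstanceAs (PartialOrder {p : X × Y // p.1 ∈ F p.2})

/-- The poset `F(y) ⊆ X` (a lower set of `X`), seen as a poset. -/
def FyP (F : Y →o LowerSet X) (y : Y) : Type := {x : X // x ∈ F y}

instance (F : Y →o LowerSet X) (y : Y) : PartialOrder (FyP F y) :=
  inferInstanceAs (PartialOrder {x : X // x ∈ F y})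

/-- The order embedding `i_y : F(y) → Γ`, `x ↦ (x, y)`. -/
def iy (F : Y →o LowerSet X) (y : Y) (x : FyP F y) : Gam F := ⟨(x.1, y), x.2⟩

lemma iy_monotone (F : Y →o LowerSet X) (y : Y) : Monotone (iy F y) :=
  fun _ _ h => ⟨h, le_rfl⟩

/-- `i_y` as a functor. -/
def iyFunctor (F : Y →o LowerSet X) (y : Y) : FyP F y ⥤ Gam F :=
  (iy_monotone F y).functor

/-- The restriction functor `i_y⁻¹ : F_{Γ,k} → F_{F(y),k}` (precomposition with `i_y`). -/
def res (k : Type) [CommRing k] (F : Y →o LowerSet X) (y : Y) :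
    (Gam F ⥤ ModuleCat.{0} k) ⥤ (FyP F y ⥤ ModuleCat.{0} k) :=
  (Functor.whiskeringLeft _ _ _).obj (iyFunctor F y)

lemma mem_of_le (F : Y →o LowerSet X) {p : Gam F} {y : Y} (h : p.1.2 ≤ y) :
    p.1.1 ∈ F y := F.monotone h p.2

/-- The value of the right adjoint `(i_y)⋆` on objects:
`((i_y)⋆ φ)(a,b) = φ(a)` if `b ≤ y` and `0` otherwise. -/
noncomputable def pushObj (k : Type) [CommRing k] (F : Y →o LowerSet X) (y : Y)
    (φ : FyP F y ⥤ ModuleCat.{0} k) : Gam F ⥤ ModuleCat.{0} k where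
  obj p := ModuleCat.of k (∀ h : PLift (p.1.2 ≤ y), φ.obj ⟨p.1.1, mem_of_le F h.down⟩)
  map {p q} f := ModuleCat.ofHom
    { toFun := fun u h =>
        φ.map (homOfLE (show (⟨p.1.1, mem_of_le F ((leOfHom f).2.trans h.down)⟩ : FyP F y) ≤
          ⟨q.1.1, mem_of_le F h.down⟩ from (leOfHom f).1))
          (u ⟨(leOfHom f).2.trans h.down⟩)
      map_add' := by intro u v; funext h; simp
      map_smul' := by intro r u; funext h; simp }
  map_id p := by
    apply ModuleCat.hom_ext; apply LinearMap.ext; intro u; funext h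
    have e : ∀ v, φ.map (𝟙 (⟨p.1.1, mem_of_le F h.down⟩ : FyP F y)) v = v := by
      intro v; exact LinearMap.congr_fun (congrArg ModuleCat.Hom.hom (φ.map_id _)) v
    exact e (u h)
  map_comp {p q r} f g := by
    apply ModuleCat.hom_ext; apply LinearMap.ext; intro u; funext h
    have e := φ.map_comp
      (homOfLE (show (⟨p.1.1, mem_of_le F ((leOfHom f).2.trans ((leOfHom g).2.trans h.down))⟩ : FyP F y) ≤
        ⟨q.1.1, mem_of_le F ((leOfHom g).2.trans h.down)⟩ from (leOfHom f).1))
      (homOfLE (show (⟨q.1.1, mem_of_le F ((leOfHom g).2.trans h.down)⟩ : FyP F y) ≤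
        ⟨r.1.1, mem_of_le F h.down⟩ from (leOfHom g).1))
    exact LinearMap.congr_fun (congrArg ModuleCat.Hom.hom e) (u ⟨(leOfHom f).2.trans ((leOfHom g).2.trans h.down)⟩)



/-- The right adjoint `(i_y)⋆ : F_{F(y),k} → F_{Γ,k}` of the restriction functor. -/
noncomputable def push (k : Type) [CommRing k] (F : Y →o LowerSet X) (y : Y) :
    (FyP F y ⥤ ModuleCat.{0} k) ⥤ (Gam F ⥤ ModuleCat.{0} k) where
  obj φ := pushObj k F y φ
  map {φ ψ} η :=
    { app := fun p => ModuleCat.ofHom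
        { toFun := fun u h => η.app ⟨p.1.1, mem_of_le F h.down⟩ (u h)
          map_add' := by intro u v; funext h; simp
          map_smul' := by intro r u; funext h; simp }
      naturality := by
        intro p q f
        apply ModuleCat.hom_ext; apply LinearMap.ext; intro u; funext h
        exact LinearMap.congr_fun (congrArg ModuleCat.Hom.hom
          (η.naturality (homOfLE (show (⟨p.1.1, mem_of_le F ((leOfHom f).2.trans h.down)⟩ : FyP F y) ≤
            ⟨q.1.1, mem_of_le F h.down⟩ from (leOfHom f).1))))
          (u ⟨(leOfHom f).2.trans h.down⟩) }
  map_id φ := rfl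
  map_comp f g := rfl

/-!
The unit sends `m ∈ M(a, b)` to the family of its images under `M((a, b) ≤ (a, y))`, one for
each proof of `b ≤ y`; the counit evaluates a family at the proof of `y ≤ y`. Hom-sets of a
poset are subsingletons, so every naturality square and both triangle identities reduce to
functoriality of `M` and `φ`.
-/

section PreorderFunctor

variable {R : Type*} [Ring R] {C : Type*} [Preorder C] (M : C ⥤ ModuleCat R)

lemma map_map_apply {a b c : C} (f : a ⟶ b) (g : b ⟶ c) (h : a ⟶ c) (m : M.obj a) :
    M.map g (M.map f m) = M.map h m := by
  rw [← ModuleCat.comp_apply, ← M.map_comp, Subsingleton.elim (f ≫ g) h]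

lemma map_apply_eq_self {a : C} (f : a ⟶ a) (m : M.obj a) : M.map f m = m := by
  rw [Subsingleton.elim f (𝟙 a), M.map_id, ModuleCat.id_apply]

end PreorderFunctor

section Adjunction

variable (k : Type) [CommRing k] (F : Y →o LowerSet X) (y : Y)

lemma le_iy {p : Gam F} (h : p.1.2 ≤ y) : p ≤ iy F y ⟨p.1.1, mem_of_le F h⟩ :=
  ⟨le_rfl, h⟩

noncomputable def pushResUnit : 𝟭 _ ⟶ res k F y ⋙ push k F y where
  app M :=
    { app p := ModuleCat.ofHom (LinearMap.pi fun h => (M.map (homOfLE (le_iy F y h.down))).hom)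
      naturality p q f := by
        ext m
        funext h
        have hpq : p ≤ iy F y ⟨q.1.1, mem_of_le F h.down⟩ :=
          (leOfHom f).trans (le_iy F y h.down)
        exact (map_map_apply M _ _ (homOfLE hpq) m).trans (map_map_apply M _ _ _ m).symm }
  naturality M M' η := by
    ext p m
    funext h
    exact (NatTrans.naturality_apply η _ m).symm

noncomputable def resPushCounit : push k F y ⋙ res k F y ⟶ 𝟭 _ where
  app φ := { app x := ModuleCat.ofHom (LinearMap.proj (⟨le_rfl⟩ : PLift (y ≤ y))) }

end Adjunction

theorem statement3_general (k : Type) [CommRing k] (X Y : Type) [PartialOrder X]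
    [PartialOrder Y] (F : Y →o LowerSet X) (y : Y) :
    Nonempty (res k F y ⊣ push k F y) :=
  ⟨{ unit := pushResUnit k F y
     counit := resPushCounit k F y
     left_triangle_components M := by
       ext x m
       exact map_apply_eq_self M _ m
     right_triangle_components φ := by
       ext p u
       funext h
       exact map_apply_eq_self φ _ (u h) }⟩

/-- The functor `(i_y)⋆` is right adjoint to the restriction functor
`i_y⁻¹ : F_{Γ,k} → F_{F(y),k}` given by precomposition with `i_y`. -/
theorem statement3 (k : Type) [CommRing k] (X Y : Type) [PartialOrder X] [Fintype X]
    [PartialOrder Y] [Fintype Y] (F : Y →o LowerSet X) (y : Y) :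
    Nonempty (res k F y ⊣ push k F y) :=
  statement3_general k X Y F y

end PaperInterval
end

section
/- Let b be an odd positive integer. Then the poset Dyck_{2,b} = {f : Fin b → Fin 3 : f is monotone and b·(f i) ≥ 2·(i+1) for all i}, with the pointwise order, is a linear order with exactly (b+1)/2 elements; i.e. it is order-isomorphic to the linearly ordered set A_{(b+1)/2} = Fin((b+1)/2). -/
/-- The poset of `(2,b)`-rational Dyck paths: monotone height functions
`f : Fin b → Fin 3` staying above the diagonal (`b·(f i) ≥ 2·(i+1)` for all `i`),
with the pointwise order. -/
def Dyck2 (b : ℕ) : Type :=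
  {f : Fin b → Fin 3 // Monotone f ∧ ∀ i : Fin b, 2 * ((i : ℕ) + 1) ≤ b * (f i : ℕ)}

instance (b : ℕ) : PartialOrder (Dyck2 b) :=
  inferInstanceAs (PartialOrder
    {f : Fin b → Fin 3 // Monotone f ∧ ∀ i : Fin b, 2 * ((i : ℕ) + 1) ≤ b * (f i : ℕ)})

namespace S14

variable {c : ℕ}

lemma hval (f : Dyck2 (2*c+1)) (i : Fin (2*c+1)) :
    (f.1 i : ℕ) = 2 ∨ ((f.1 i : ℕ) = 1 ∧ (i : ℕ) < c) := by
  have h := f.2.2 i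
  have hi : (i : ℕ) < 2*c+1 := i.isLt
  have hv : (f.1 i : ℕ) < 3 := (f.1 i).isLt
  interval_cases h3 : ((f.1 i : ℕ)) <;> omega

lemma hex (f : Dyck2 (2*c+1)) :
    ∃ n, ∀ i : Fin (2*c+1), n ≤ (i : ℕ) → (f.1 i : ℕ) = 2 := by
  refine ⟨c, fun i hi => ?_⟩
  rcases hval f i with h | ⟨h, hlt⟩
  · exact h
  · omega

noncomputable def t (f : Dyck2 (2*c+1)) : ℕ := Nat.find (hex f)

lemma t_le (f : Dyck2 (2*c+1)) : t f ≤ c :=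
  Nat.find_le (by
    intro i hi
    rcases hval f i with h | ⟨h, hlt⟩
    · exact h
    · omega)

lemma t_spec₂ (f : Dyck2 (2*c+1)) (i : Fin (2*c+1)) (hi : t f ≤ (i:ℕ)) :
    (f.1 i : ℕ) = 2 := Nat.find_spec (hex f) i hi

lemma t_spec₁ (f : Dyck2 (2*c+1)) (i : Fin (2*c+1)) (hi : (i:ℕ) < t f) :
    (f.1 i : ℕ) = 1 := by
  have hmin := Nat.find_min (hex f) (m := (i:ℕ)) hi
  push_neg at hmin
  obtain ⟨j, hij, hj2⟩ := hmin
  have hj1 : (f.1 j : ℕ) = 1 := by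
    rcases hval f j with h | ⟨h, _⟩
    · exact absurd h hj2
    · exact h
  have hle : f.1 i ≤ f.1 j := f.2.1 (show i ≤ j from hij)
  have : (f.1 i : ℕ) ≤ (f.1 j : ℕ) := hle
  rcases hval f i with h | ⟨h, _⟩
  · omega
  · exact h

def theta (c : ℕ) (k : Fin (c+1)) : Dyck2 (2*c+1) := by
  refine ⟨fun i => if (i:ℕ) < c - (k:ℕ) then 1 else 2, ?_, ?_⟩
  · intro i j hij
    have hij' : (i:ℕ) ≤ (j:ℕ) := hij
    dsimp only
    split_ifs with h1 h2
    · exact le_refl _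
    · decide
    · omega
    · exact le_refl _
  · intro i
    have hi : (i:ℕ) < 2*c+1 := i.isLt
    dsimp only
    split_ifs with h
    · have : ((1 : Fin 3) : ℕ) = 1 := rfl
      rw [this]; omega
    · have : ((2 : Fin 3) : ℕ) = 2 := rfl
      rw [this]; omega

lemma theta_apply (k : Fin (c+1)) (i : Fin (2*c+1)) :
    ((theta c k).1 i : ℕ) = if (i:ℕ) < c - (k:ℕ) then 1 else 2 := by
  show (((if (i:ℕ) < c - (k:ℕ) then (1:Fin 3) else 2) : Fin 3) : ℕ) = _
  split_ifs <;> rfl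

lemma t_theta (k : Fin (c+1)) : t (theta c k) = c - (k:ℕ) := by
  rw [t, Nat.find_eq_iff]
  constructor
  · intro i hi
    rw [theta_apply, if_neg (by omega)]
  · intro n hn h
    have hk : (k:ℕ) < c+1 := k.isLt
    have hn' : n < 2*c+1 := by omega
    have := h ⟨n, hn'⟩ (le_refl n)
    rw [theta_apply] at this
    simp only [Fin.val_mk] at this
    rw [if_pos hn] at this
    omega

lemma le_iff (f g : Dyck2 (2*c+1)) : f ≤ g ↔ t g ≤ t f := by
  constructor
  · intro hfg
    by_contra h
    push_neg at h
    have hlt : t f < 2*c+1 := by have := t_le g; omega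
    set i : Fin (2*c+1) := ⟨t f, hlt⟩
    have h2 : (f.1 i : ℕ) = 2 := t_spec₂ f i (le_refl _)
    have h1 : (g.1 i : ℕ) = 1 := t_spec₁ g i h
    have : f.1 i ≤ g.1 i := hfg i
    have : (f.1 i : ℕ) ≤ (g.1 i : ℕ) := this
    omega
  · intro h i
    show f.1 i ≤ g.1 i
    show (f.1 i : ℕ) ≤ (g.1 i : ℕ)
    by_cases hi : (i:ℕ) < t g
    · have := t_spec₁ g i hi
      have := t_spec₁ f i (by omega)
      omega
    · have := t_spec₂ g i (by omega)
      have : (f.1 i : ℕ) < 3 := (f.1 i).isLt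
      omega

noncomputable def iso (c : ℕ) : Dyck2 (2*c+1) ≃o Fin (c+1) where
  toFun f := ⟨c - t f, by have := t_le f; omega⟩
  invFun := theta c
  left_inv f := by
    apply Subtype.ext
    funext i
    have htle := t_le f
    apply Fin.ext
    have happ := theta_apply (c := c) ⟨c - t f, by omega⟩ i
    simp only [Fin.val_mk] at happ
    have heq : c - (c - t f) = t f := by omega
    rw [heq] at happ
    rw [happ]
    by_cases hi : (i:ℕ) < t f
    · rw [if_pos hi, t_spec₁ f i hi]
    · rw [if_neg hi, t_spec₂ f i (by omega)]
  right_inv k := by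
    apply Fin.ext
    show c - t (theta c k) = (k:ℕ)
    rw [t_theta]
    have := k.isLt
    omega
  map_rel_iff' := by
    intro f g
    show (⟨c - t f, _⟩ : Fin (c+1)) ≤ ⟨c - t g, _⟩ ↔ f ≤ g
    rw [Fin.mk_le_mk, le_iff]
    have := t_le f; have := t_le g
    omega

end S14

/-- **Statement 14.** For an odd positive integer `b`, the poset `Dyck_{2,b}` is
order-isomorphic to the linearly ordered set `A_{(b+1)/2} = Fin ((b+1)/2)`. -/
theorem statement14 (b : ℕ) (hb : 0 < b) (hodd : Odd b) :
    Nonempty (Dyck2 b ≃o Fin ((b + 1) / 2)) := by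
  obtain ⟨c, rfl⟩ := hodd
  have h : (2*c+1+1)/2 = c+1 := by omega
  rw [h]
  exact ⟨S14.iso c⟩
end
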